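/- The infinite product ∏_{k≥1}(1−q^k) equals the sum ∑_{j=−∞}^{∞}(−1)^j q^{j(3j+1)/2} as formal power series (Euler's pentagonal number theorem). -/

import Mathlib

/-!
Mathlib proves the pentagonal number theorem for `∏ (1 - X ^ (k + 1))` in the form
`coeff_prod_one_sub_X_pow_eventually_eq`. Multiplying by `1 - X ^ m` with `m > n` does not change
the `n`-th coefficient, so the partial product up to `n` already has the limiting coefficient.
The exponent `j(3j+1)/2` is `pentagonal (-j)`, and pentagonal numbers are injective, so the sum on
the right has at most one nonzero term.
-/

open Filter Finset PowerSeries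

namespace PowerSeries

variable {R : Type*} [CommRing R]

theorem coeff_mul_one_sub_X_pow_of_lt (f : R⟦X⟧) {n m : ℕ} (h : n < m) :
    coeff n (f * (1 - X ^ m)) = coeff n f := by
  rw [mul_sub, mul_one, map_sub, coeff_mul_X_pow', if_neg (by omega), sub_zero]

theorem coeff_prod_range_one_sub_X_pow_of_le {n N : ℕ} (h : n ≤ N) :
    coeff n (∏ k ∈ range N, (1 - X ^ (k + 1)) : R⟦X⟧) =
      coeff n (∏ k ∈ range n, (1 - X ^ (k + 1)) : R⟦X⟧) := by
  induction N, h using Nat.le_induction with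
  | base => rfl
  | succ N hnN ih => rw [prod_range_succ, coeff_mul_one_sub_X_pow_of_lt _ (by omega), ih]

variable (R) in
theorem coeff_prod_range_one_sub_X_pow (n : ℕ) :
    coeff n (∏ k ∈ range n, (1 - X ^ (k + 1)) : R⟦X⟧) = coeff n (pentagonalSeries R) := by
  obtain ⟨N, hN, hnN⟩ := ((tendsto_finset_range.eventually
    (coeff_prod_one_sub_X_pow_eventually_eq R n)).and (eventually_ge_atTop n)).exists
  rw [← coeff_prod_range_one_sub_X_pow_of_le hnN, hN]

open WithPiTopology in
theorem hasSum_coeff_pentagonalSeries [TopologicalSpace R] (n : ℕ) :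
    HasSum (fun k : ℤ ↦ if pentagonal k = n then (k.negOnePow : R) else 0)
      (coeff n (pentagonalSeries R)) := by
  convert (hasSum_pentagonalSeries R).map (coeff n) (continuous_coeff R n) with k
  rw [Function.comp_apply, ← map_intCast (C (R := R)), coeff_C_mul_X_pow]
  simp only [eq_comm]

end PowerSeries

theorem natCast_pentagonal_neg (k : ℤ) : (pentagonal (-k) : ℤ) = k * (3 * k + 1) / 2 := by
  rw [natCast_pentagonal]
  ring_nf

/-- Euler's pentagonal number theorem, stated coefficientwise: the `n`-th coefficient of
the infinite product `∏_{k≥1}(1-q^k)` (which equals that of the partial product up to `n`)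
is `∑_{j∈ℤ, j(3j+1)/2 = n} (-1)^j`. -/
theorem euler_pentagonal_number_theorem (n : ℕ) :
    (PowerSeries.coeff (R := ℤ) n)
        (∏ k ∈ Finset.Icc 1 n, (1 - (PowerSeries.X : PowerSeries ℤ) ^ k)) =
      ∑' j : ℤ, if j * (3 * j + 1) / 2 = (n : ℤ) then (-1 : ℤ) ^ j.natAbs else 0 := by
  rw [← Ico_add_one_right_eq_Icc, prod_Ico_eq_prod_range, Nat.add_sub_cancel]
  simp_rw [add_comm 1]
  rw [coeff_prod_range_one_sub_X_pow, ← (hasSum_coeff_pentagonalSeries n).tsum_eq,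
    ← (Equiv.neg ℤ).tsum_eq]
  simp_rw [Equiv.neg_apply, ← natCast_pentagonal_neg, Nat.cast_inj, Int.coe_negOnePow,
    Int.natAbs_neg]
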